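/- arXiv:2109.10081 — 2 statements merged into one kernel-verified Lean document; each statement's English description precedes it below -/
import Mathlib

section
/- Assume the setup where for each x ∈ G there is a k-linear map r_x : Ker π → A (either arising from a short exact sequence in the compatible situation, or r_x = 0), s : A → B is a fixed section of the surjection π : B → A, and for all y, z ∈ G there exists a kG-module homomorphism r'_{y,z} : B → A with r_{yz} − r_y − r_z = r'_{y,z}|_{Ker π}. Then for all x, y ∈ G, the induced maps on cohomology satisfy θ_{G,A,xy}^* = θ_{G,A,x}^* + θ_{G,A,y}^*, where θ_{G,A,x}^*(φ̄) is the class of r_x ∘ ∂_B(s ∘ φ) for a cocycle φ. -/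
/-! On `Ker π` the difference `r_{xy} - r_x - r_y` is a `kG`-map `r'`, and
`∂_B (s ∘ φ)` lies in `Ker π` because `π` commutes with the coboundary and `φ` is a cocycle.
Since `r'` also commutes with the coboundary, the difference of the two cochains is
`∂_A (r' ∘ s ∘ φ)`. -/

/-- Coboundary on inhomogeneous group cochains, with the `G`-action given
explicitly by `ρ`. -/
def gd {G A : Type*} [Group G] [AddCommGroup A]
    (ρ : G → A → A) (n : ℕ) (φ : (Fin n → G) → A) : (Fin (n+1) → G) → A :=
  fun g => ρ (g 0) (φ fun i => g i.succ)
    + ∑ j : Fin (n+1), ((-1 : ℤ) ^ ((j : ℕ) + 1)) • φ (Fin.contractNth j (· * ·) g)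

/-- Cup product of inhomogeneous cochains with coefficients in a `G`-algebra,
with the `G`-action given explicitly by `ρ`. -/
def cup {G A : Type*} [Group G] [Mul A]
    (ρ : G → A → A) {m n N : ℕ} (h : m + n = N)
    (α : (Fin m → G) → A) (β : (Fin n → G) → A) : (Fin N → G) → A :=
  fun g => α (fun i => g ⟨(i : ℕ), by omega⟩) *
    ρ ((List.ofFn fun i : Fin m => g ⟨(i : ℕ), by omega⟩).prod)
      (β fun i => g ⟨m + (i : ℕ), by omega⟩)

theorem map_gd {G A B F : Type*} [Group G] [AddCommGroup A] [AddCommGroup B]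
    [FunLike F B A] [AddMonoidHomClass F B A]
    {ρA : G → A → A} {ρB : G → B → B} (f : F) (hf : ∀ g b, f (ρB g b) = ρA g (f b))
    (n : ℕ) (u : (Fin n → G) → B) (g : Fin (n+1) → G) :
    f (gd ρB n u g) = gd ρA n (fun t => f (u t)) g := by
  simp only [gd, map_add, map_sum, map_zsmul, hf]

theorem map_gd_comp_section_of_gd_eq_zero {G A B F : Type*} [Group G] [AddCommGroup A]
    [AddCommGroup B] [FunLike F B A] [AddMonoidHomClass F B A]
    {ρA : G → A → A} {ρB : G → B → B} (f : F) (hf : ∀ g b, f (ρB g b) = ρA g (f b))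
    {s : A → B} (hs : ∀ a, f (s a) = a) {n : ℕ} {φ : (Fin n → G) → A}
    (hφ : gd ρA n φ = 0) (g : Fin (n+1) → G) :
    f (gd ρB n (fun t => s (φ t)) g) = 0 := by
  simp only [map_gd f hf, hs, hφ, Pi.zero_apply]

theorem stmt9_general {k G A B : Type*} [CommRing k] [Group G]
    [Ring A] [Algebra k A] [Ring B] [Algebra k B]
    (ρA : G → A → A) (ρB : G → B → B)
    -- `π : B → A` surjective `kG`-module homomorphism, `Ker π` an ideal
    (π : B →ₗ[k] A)
    (hπG : ∀ g b, π (ρB g b) = ρA g (π b))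
    -- fixed set-theoretic section `s` of `π`
    (s : A → B) (hs : ∀ a, π (s a) = a)
    -- the family of `k`-linear maps `r_x : Ker π → A` (encoded as total maps)
    (r : G → B → A)
    -- cocycle condition: `r_{yz} − r_y − r_z` is the restriction of a `kG`-homomorphism
    (hcocycle : ∀ y z : G, ∃ r' : B →ₗ[k] A,
      (∀ g b, r' (ρB g b) = ρA g (r' b)) ∧
      (∀ b, π b = 0 → r (y*z) b - r y b - r z b = r' b)) :
    ∀ x y : G, ∀ (n : ℕ) (φ : (Fin n → G) → A), gd ρA n φ = 0 →
      ∃ ψ : (Fin n → G) → A,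
        (fun g => r (x*y) (gd ρB n (fun t => s (φ t)) g))
          = (fun g => r x (gd ρB n (fun t => s (φ t)) g))
            + (fun g => r y (gd ρB n (fun t => s (φ t)) g))
            + gd ρA n ψ := by
  intro x y n φ hφ
  obtain ⟨r', hr'G, hr'⟩ := hcocycle x y
  refine ⟨fun t => r' (s (φ t)), funext fun g => ?_⟩
  have hlift_ker := map_gd_comp_section_of_gd_eq_zero π hπG hs hφ g
  rw [Pi.add_apply, Pi.add_apply, ← map_gd r' hr'G, ← hr' _ hlift_ker]
  abel

/-- given a family of maps `r_x : Ker π → A` (`x ∈ G`) such that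
`r_{yz} − r_y − r_z` is the restriction to `Ker π` of a `kG`-module
homomorphism `B → A`, the induced maps on cohomology,
`θ_{G,A,x}(φ̄) = class of r_x ∘ ∂_B(s ∘ φ)`, satisfy
`θ_{G,A,xy} = θ_{G,A,x} + θ_{G,A,y}`: on cocycle representatives the difference
is a coboundary. -/
theorem stmt9 {k G A B : Type*} [CommRing k] [Group G] [Fintype G]
    [Ring A] [Algebra k A] [Ring B] [Algebra k B]
    (ρA : G → A → A) (ρB : G → B → B)
    (hρA1 : ∀ a, ρA 1 a = a)
    (hρAmul : ∀ g h a, ρA (g * h) a = ρA g (ρA h a))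
    (hρAadd : ∀ g a a', ρA g (a + a') = ρA g a + ρA g a')
    (hρAsmul : ∀ g (c : k) a, ρA g (c • a) = c • ρA g a)
    (hρAring : ∀ g a a', ρA g (a * a') = ρA g a * ρA g a')
    (hρB1 : ∀ b, ρB 1 b = b)
    (hρBmul : ∀ g h b, ρB (g * h) b = ρB g (ρB h b))
    (hρBadd : ∀ g b b', ρB g (b + b') = ρB g b + ρB g b')
    (hρBsmul : ∀ g (c : k) b, ρB g (c • b) = c • ρB g b)
    -- `π : B → A` surjective `kG`-module homomorphism, `Ker π` an ideal
    (π : B →ₗ[k] A)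
    (hπG : ∀ g b, π (ρB g b) = ρA g (π b))
    (hsurj : Function.Surjective π)
    (hker : ∀ b b', π b = 0 → π (b * b') = 0 ∧ π (b' * b) = 0)
    -- fixed set-theoretic section `s` of `π`
    (s : A → B) (hs : ∀ a, π (s a) = a)
    -- the family of `k`-linear maps `r_x : Ker π → A` (encoded as total maps)
    (r : G → B → A)
    (hradd : ∀ x b b', π b = 0 → π b' = 0 → r x (b + b') = r x b + r x b')
    (hrsmul : ∀ x (c : k) b, π b = 0 → r x (c • b) = c • r x b)
    -- cocycle condition: `r_{yz} − r_y − r_z` is the restriction of a `kG`-homomorphism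
    (hcocycle : ∀ y z : G, ∃ r' : B →ₗ[k] A,
      (∀ g b, r' (ρB g b) = ρA g (r' b)) ∧
      (∀ b, π b = 0 → r (y*z) b - r y b - r z b = r' b)) :
    ∀ x y : G, ∀ (n : ℕ) (φ : (Fin n → G) → A), gd ρA n φ = 0 →
      ∃ ψ : (Fin n → G) → A,
        (fun g => r (x*y) (gd ρB n (fun t => s (φ t)) g))
          = (fun g => r x (gd ρB n (fun t => s (φ t)) g))
            + (fun g => r y (gd ρB n (fun t => s (φ t)) g))
            + gd ρA n ψ :=
  stmt9_general ρA ρB π hπG s hs r hcocycle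
end

section
/- With the same hypotheses, define Δ : KG ⊗ H* → KG ⊗ H^{*+1} by Δ(x ⊗ α) = x ⊗ θ_x(α). Then Δ ∘ Δ = 0, and for all x,y ∈ G and homogeneous α, β: [x⊗α, y⊗β] = (−1)^{|α|} Δ((x⊗α)·(y⊗β)) − (−1)^{|α|} Δ(x⊗α)·(y⊗β) − (x⊗α)·Δ(y⊗β). Consequently (KG ⊗ H*, ·, [·,·], Δ) is a BD algebra (a P_0 algebra with a square-zero degree +1 operator whose failure to be a derivation is the bracket). -/
/-! Additivity of `θ` splits `Δ` of the product `xy ⊗ αβ` into the `θ_x`- and `θ_y`-parts.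
Expanding each by the graded Leibniz rule, the sign `(−1)^{|α|}` squares to one, and the terms
`Δ(x⊗α)·(y⊗β)` and `(x⊗α)·Δ(y⊗β)` cancel one half of each part, leaving the bracket. -/

open TensorProduct

/-- The BD bracket on homogeneous elements of `KG ⊗ H*`:
`[x ⊗ α, y ⊗ β] = xy ⊗ ((−1)^{|α|} θ_y(α)·β + α·θ_x(β))`, where `m = |α|`. -/
noncomputable def brkt {K G A : Type*} [Field K] [CommGroup G] [Ring A] [Algebra K A]
    (θ : G → A →ₗ[K] A) (x : G) (m : ℤ) (α : A) (y : G) (β : A) :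
    MonoidAlgebra K G ⊗[K] A :=
  MonoidAlgebra.single (x*y) (1:K) ⊗ₜ[K] (((-1:K)^m) • (θ y α * β) + α * θ x β)

theorem neg_one_zpow_smul_neg_one_zpow_smul {K M : Type*} [DivisionRing K] [AddCommGroup M]
    [Module K M] (m : ℤ) (v : M) : (-1:K)^m • (-1:K)^m • v = v := by
  rw [smul_smul, ← zpow_add₀ (neg_ne_zero.mpr one_ne_zero), Even.neg_one_zpow ⟨m, rfl⟩,
    one_smul]

theorem single_one_tmul_mul_single_one_tmul {K G A : Type*} [CommSemiring K] [Monoid G]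
    [Semiring A] [Algebra K A] (x y : G) (a b : A) :
    (MonoidAlgebra.single x (1:K) ⊗ₜ[K] a) * (MonoidAlgebra.single y (1:K) ⊗ₜ[K] b) =
      MonoidAlgebra.single (x * y) (1:K) ⊗ₜ[K] (a * b) := by
  rw [Algebra.TensorProduct.tmul_mul_tmul, MonoidAlgebra.single_mul_single, one_mul]

section GradedLeibniz

variable {K A : Type*} [Field K] [Ring A] [Algebra K A] {d e : A →ₗ[K] A} {m : ℤ} {α β : A}

theorem neg_one_zpow_smul_map_mul_sub (hd : d (α * β) = d α * β + (-1:K)^m • (α * d β)) :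
    (-1:K)^m • d (α * β) - (-1:K)^m • (d α * β) = α * d β := by
  rw [hd, smul_add, neg_one_zpow_smul_neg_one_zpow_smul, add_sub_cancel_left]

theorem bracket_eq_neg_one_zpow_smul_add_apply_mul
    (hd : d (α * β) = d α * β + (-1:K)^m • (α * d β))
    (he : e (α * β) = e α * β + (-1:K)^m • (α * e β)) :
    (-1:K)^m • (e α * β) + α * d β =
      (-1:K)^m • (d + e) (α * β) - (-1:K)^m • (d α * β) - α * e β := by
  rw [LinearMap.add_apply, smul_add, ← neg_one_zpow_smul_map_mul_sub hd, he, smul_add,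
    neg_one_zpow_smul_neg_one_zpow_smul]
  abel

end GradedLeibniz

theorem stmt14_general {K G A : Type*} [Field K] [CommGroup G] [Ring A] [Algebra K A]
    (𝒜 : ℤ → Submodule K A)
    (θ : G → A →ₗ[K] A)
    (hθder : ∀ (x : G) (m : ℤ) (a b : A), a ∈ 𝒜 m →
      θ x (a * b) = θ x a * b + ((-1:K)^m) • (a * θ x b))
    (hθadd : ∀ x y : G, θ (x*y) = θ x + θ y)
    (hθcomp : ∀ x y : G, (θ x) ∘ₗ (θ y) = 0)
    (x y : G) (m : ℤ) (α β : A) (hα : α ∈ 𝒜 m) :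
    (∀ (z : G) (a : A),
      MonoidAlgebra.single z (1:K) ⊗ₜ[K] θ z (θ z a) = (0 : MonoidAlgebra K G ⊗[K] A))
    ∧ brkt θ x m α y β
        = ((-1:K)^m) • (MonoidAlgebra.single (x*y) (1:K) ⊗ₜ[K] θ (x*y) (α * β))
          - ((-1:K)^m) • ((MonoidAlgebra.single x (1:K) ⊗ₜ[K] θ x α)
              * (MonoidAlgebra.single y (1:K) ⊗ₜ[K] β))
          - (MonoidAlgebra.single x (1:K) ⊗ₜ[K] α)
              * (MonoidAlgebra.single y (1:K) ⊗ₜ[K] θ y β) := by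
  refine ⟨fun z a => ?_, ?_⟩
  · rw [← LinearMap.comp_apply, hθcomp, LinearMap.zero_apply, tmul_zero]
  · rw [brkt, single_one_tmul_mul_single_one_tmul, single_one_tmul_mul_single_one_tmul,
      ← tmul_smul, ← tmul_smul, ← tmul_sub, ← tmul_sub, hθadd,
      bracket_eq_neg_one_zpow_smul_add_apply_mul (hθder x m α β hα) (hθder y m α β hα)]

/-- the operator `Δ(x ⊗ α) = x ⊗ θ_x(α)` on `KG ⊗ H*` squares to
zero and its failure to be a derivation is the bracket:
`[x⊗α, y⊗β] = (−1)^{|α|} Δ((x⊗α)·(y⊗β)) − (−1)^{|α|} Δ(x⊗α)·(y⊗β) − (x⊗α)·Δ(y⊗β)`;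
consequently `(KG ⊗ H*, ·, [·,·], Δ)` is a BD algebra. -/
theorem stmt14 {K G A : Type*} [Field K] [CommGroup G] [Ring A] [Algebra K A]
    (𝒜 : ℤ → Submodule K A) [SetLike.GradedMonoid 𝒜]
    (hcomm : ∀ (m n : ℤ) (a b : A), a ∈ 𝒜 m → b ∈ 𝒜 n →
      a * b = ((-1:K)^(m*n)) • (b * a))
    (θ : G → A →ₗ[K] A)
    (hθdeg : ∀ (x : G) (m : ℤ) a, a ∈ 𝒜 m → θ x a ∈ 𝒜 (m+1))
    (hθder : ∀ (x : G) (m : ℤ) (a b : A), a ∈ 𝒜 m →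
      θ x (a * b) = θ x a * b + ((-1:K)^m) • (a * θ x b))
    (hθadd : ∀ x y : G, θ (x*y) = θ x + θ y)
    (hθcomp : ∀ x y : G, (θ x) ∘ₗ (θ y) = 0)
    (x y : G) (m n : ℤ) (α β : A) (hα : α ∈ 𝒜 m) (hβ : β ∈ 𝒜 n) :
    (∀ (z : G) (a : A),
      MonoidAlgebra.single z (1:K) ⊗ₜ[K] θ z (θ z a) = (0 : MonoidAlgebra K G ⊗[K] A))
    ∧ brkt θ x m α y β
        = ((-1:K)^m) • (MonoidAlgebra.single (x*y) (1:K) ⊗ₜ[K] θ (x*y) (α * β))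
          - ((-1:K)^m) • ((MonoidAlgebra.single x (1:K) ⊗ₜ[K] θ x α)
              * (MonoidAlgebra.single y (1:K) ⊗ₜ[K] β))
          - (MonoidAlgebra.single x (1:K) ⊗ₜ[K] α)
              * (MonoidAlgebra.single y (1:K) ⊗ₜ[K] θ y β) :=
  stmt14_general 𝒜 θ hθder hθadd hθcomp x y m α β hα
end
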